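/- arXiv:1811.00798 — 5 statements merged into one kernel-verified Lean document; each statement's English description precedes it below -/
import Mathlib

section
/- If L ⊆ M_{n,d,t} is a t-spread strongly stable set, then its t-shadow shad_t(L) ⊆ M_{n,d+1,t} is also a t-spread strongly stable set. -/
open Finset

/-- The set of `t`-spread "monomials" of degree `d` in variables `x_1,...,x_n`,
identified with `d`-element subsets of `{1,...,n}` with consecutive gaps `≥ t`. -/
def M (n d t : ℕ) : Finset (Finset ℕ) :=
  (Finset.powersetCard d (Finset.Icc 1 n)).filter
    (fun F => ∀ i ∈ F, ∀ j ∈ F, i < j → i + t ≤ j)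

/-- The `τ`-shadow of a family `L ⊆ M n d t`. -/
def shad (τ n d : ℕ) (L : Finset (Finset ℕ)) : Finset (Finset ℕ) :=
  (M n (d + 1) τ).filter (fun G => ∃ F ∈ L, F ⊆ G)

/-- `F >_lex G` : the smallest element of the symmetric difference belongs to `F`. -/
def lexGT (F G : Finset ℕ) : Prop :=
  ∃ k, k ∈ F ∧ k ∉ G ∧ ∀ j < k, (j ∈ F ↔ j ∈ G)

/-- `L` is a `t`-spread lex set in `M n d t` (a lex up-set). -/
def IsLexSet (n d t : ℕ) (L : Finset (Finset ℕ)) : Prop :=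
  L ⊆ M n d t ∧ ∀ u ∈ L, ∀ v ∈ M n d t, lexGT v u → v ∈ L

/-- `L` is a `t`-spread strongly stable set in `M n d t`. -/
def IsSSS (n d t : ℕ) (L : Finset (Finset ℕ)) : Prop :=
  L ⊆ M n d t ∧ ∀ F ∈ L, ∀ j ∈ F, ∀ i < j, i ∉ F →
    insert i (F.erase j) ∈ M n d t → insert i (F.erase j) ∈ L

/-- number of members of `L` with maximum element `= i`. -/
def mEq (i : ℕ) (L : Finset (Finset ℕ)) : ℕ :=
  (L.filter (fun F => i ∈ F ∧ ∀ j ∈ F, j ≤ i)).card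

/-- number of members of `L` with maximum element `≤ i`. -/
def mLe (i : ℕ) (L : Finset (Finset ℕ)) : ℕ :=
  (L.filter (fun F => ∀ j ∈ F, j ≤ i)).card

lemma mem_M_of_subset {n m k t : ℕ} {G F : Finset ℕ} (hG : G ∈ M n m t)
    (hFG : F ⊆ G) (hk : F.card = k) : F ∈ M n k t := by
  simp only [M, Finset.mem_filter, Finset.mem_powersetCard] at hG ⊢
  exact ⟨⟨hFG.trans hG.1.1, hk⟩, fun i hi j hj hij => hG.2 i (hFG hi) j (hFG hj) hij⟩

/-- the `t`-shadow of a `t`-spread strongly stable set is again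
`t`-spread strongly stable. -/
theorem shad_isSSS (n d t : ℕ) (ht : 1 ≤ t) (hd : 1 ≤ d)
    (L : Finset (Finset ℕ)) (hL : IsSSS n d t L) :
    IsSSS n (d + 1) t (shad t n d L) := by
  refine ⟨Finset.filter_subset _ _, ?_⟩
  intro G hG j hj i hij hiG hG'
  rw [shad, Finset.mem_filter] at hG ⊢
  obtain ⟨hGM, F, hFL, hFG⟩ := hG
  refine ⟨hG', ?_⟩
  by_cases hjF : j ∈ F
  · -- replace j by i in F as well
    have hFcard : F.card = d := by
      have := hL.1 hFL
      simp only [M, Finset.mem_filter, Finset.mem_powersetCard] at this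
      exact this.1.2
    have hiF : i ∉ F := fun h => hiG (hFG h)
    set F' := insert i (F.erase j) with hF'
    have hF'sub : F' ⊆ insert i (G.erase j) := by
      intro a ha
      rcases Finset.mem_insert.mp ha with rfl | ha
      · exact Finset.mem_insert_self _ _
      · exact Finset.mem_insert_of_mem
          (Finset.mem_erase.mpr ⟨(Finset.mem_erase.mp ha).1, hFG (Finset.mem_erase.mp ha).2⟩)
    have hF'card : F'.card = d := by
      rw [hF', Finset.card_insert_of_notMem (fun h => hiF (Finset.mem_of_mem_erase h)),
        Finset.card_erase_of_mem hjF, hFcard, Nat.sub_add_cancel hd]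
    have hF'M : F' ∈ M n d t := mem_M_of_subset hG' hF'sub hF'card
    exact ⟨F', hL.2 F hFL j hjF i hij hiF hF'M, hF'sub⟩
  · refine ⟨F, hFL, fun a ha => Finset.mem_insert_of_mem (Finset.mem_erase.mpr
      ⟨fun h => hjF (h ▸ ha), hFG ha⟩)⟩
end

section
/- If L ⊆ M_{n,d,t} is a t-spread lex set, then shad_t(L) ⊆ M_{n,d+1,t} is also a t-spread lex set. -/
open Finset

lemma mem_M_iff {n d t : ℕ} {F : Finset ℕ} :
    F ∈ M n d t ↔ F ⊆ Finset.Icc 1 n ∧ F.card = d ∧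
      ∀ i ∈ F, ∀ j ∈ F, i < j → i + t ≤ j := by
  simp [M, Finset.mem_powersetCard, and_assoc]

/-- the `t`-shadow of a `t`-spread lex set is again a `t`-spread lex set. -/
theorem shad_isLexSet (n d t : ℕ) (ht : 1 ≤ t) (hd : 1 ≤ d)
    (L : Finset (Finset ℕ)) (hL : IsLexSet n d t L) :
    IsLexSet n (d + 1) t (shad t n d L) := by
  obtain ⟨hLsub, hLup⟩ := hL
  refine ⟨Finset.filter_subset _ _, ?_⟩
  intro u hu v hv hvu
  rw [shad, mem_filter] at hu
  obtain ⟨huM, F, hFL, hFu⟩ := hu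
  obtain ⟨huI, hucard, husp⟩ := mem_M_iff.mp huM
  obtain ⟨hFI, hFcard, hFsp⟩ := mem_M_iff.mp (hLsub hFL)
  obtain ⟨hvI, hvcard, hvsp⟩ := mem_M_iff.mp hv
  -- get the extra element x of u over F
  have hsd : (u \ F).card = 1 := by
    rw [card_sdiff_of_subset hFu, hucard, hFcard]; omega
  obtain ⟨x, hx⟩ := Finset.card_eq_one.mp hsd
  have hxu : x ∈ u := (mem_sdiff.mp (hx ▸ mem_singleton_self x)).1
  have hxF : x ∉ F := (mem_sdiff.mp (hx ▸ mem_singleton_self x)).2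
  have hmem : ∀ j, j ∈ u ↔ (j ∈ F ∨ j = x) := by
    intro j
    constructor
    · intro hj
      by_cases hjF : j ∈ F
      · exact Or.inl hjF
      · exact Or.inr (mem_singleton.mp (hx ▸ mem_sdiff.mpr ⟨hj, hjF⟩))
    · rintro (h | rfl)
      · exact hFu h
      · exact hxu
  -- the max of v
  have hne : v.Nonempty := card_pos.mp (by rw [hvcard]; omega)
  set y := v.max' hne with hy
  have hyv : y ∈ v := v.max'_mem hne
  have hymax : ∀ a ∈ v, a ≤ y := fun a ha => v.le_max' a ha
  set v' := v.erase y with hv'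
  have hv'sub : v' ⊆ v := erase_subset _ _
  have hv'M : v' ∈ M n d t := by
    refine mem_M_iff.mpr ⟨hv'sub.trans hvI, ?_, ?_⟩
    · rw [hv', card_erase_of_mem hyv, hvcard]; omega
    · exact fun i hi j hj hij => hvsp i (hv'sub hi) j (hv'sub hj) hij
  obtain ⟨k, hkv, hku, hagree⟩ := hvu
  have hky : k ≤ y := hymax k hkv
  have hv'L : v' ∈ L := by
    by_cases hxk : x < k
    · -- witness x
      refine hLup F hFL v' hv'M ⟨x, ?_, hxF, ?_⟩
      · have hxv : x ∈ v := (hagree x hxk).mpr hxu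
        exact mem_erase.mpr ⟨by omega, hxv⟩
      · intro j hj
        have hjk : j < k := by omega
        have h1 : j ∈ v' ↔ j ∈ v := by
          rw [hv', mem_erase]; constructor
          · exact fun h => h.2
          · exact fun h => ⟨by omega, h⟩
        rw [h1, hagree j hjk, hmem]
        constructor
        · rintro (h | rfl)
          · exact h
          · exact absurd hj (lt_irrefl _)
        · exact Or.inl
    · push_neg at hxk  -- k ≤ x
      have hxk' : k < x := lt_of_le_of_ne hxk (by rintro rfl; exact hku hxu)
      by_cases hyk : y = k
      · -- v' = F
        have hfilt : u.filter (fun a => a < k) = v.erase k := by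
          ext a
          simp only [mem_filter, mem_erase]
          constructor
          · intro ⟨hau, hak⟩
            exact ⟨by omega, (hagree a hak).mpr hau⟩
          · intro ⟨hak, hav⟩
            have : a < k := lt_of_le_of_ne (hyk ▸ hymax a hav) hak
            exact ⟨(hagree a this).mp hav, this⟩
        have hcf : (u.filter (fun a => a < k)).card = d := by
          rw [hfilt, card_erase_of_mem (hyk ▸ hyv), hvcard]; omega
        have hcf2 : (u.filter (fun a => ¬ a < k)).card = 1 := by
          have := Finset.card_filter_add_card_filter_not
            (s := u) (p := fun a => a < k)
          omega
        have heq : v' = F := by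
          ext j
          rw [hv', hyk, mem_erase]
          constructor
          · intro ⟨hjk, hjv⟩
            have hjlt : j < k := lt_of_le_of_ne (hyk ▸ hymax j hjv) hjk
            have hju : j ∈ u := (hagree j hjlt).mp hjv
            rcases (hmem j).mp hju with h | rfl
            · exact h
            · omega
          · intro hjF
            have hju : j ∈ u := hFu hjF
            have hjx : j ≠ x := fun h => hxF (h ▸ hjF)
            have hjlt : j < k := by
              by_contra h
              push_neg at h
              have h1 : j ∈ u.filter (fun a => ¬ a < k) := by
                simp [hju]; omega
              have h2 : x ∈ u.filter (fun a => ¬ a < k) := by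
                simp [hxu]; omega
              exact hjx (Finset.card_le_one.mp (le_of_eq hcf2) j h1 x h2)
            exact ⟨by omega, (hagree j hjlt).mpr hju⟩
        exact heq ▸ hFL
      · -- k < y, witness k
        have hky' : k < y := lt_of_le_of_ne hky (Ne.symm hyk)
        refine hLup F hFL v' hv'M ⟨k, mem_erase.mpr ⟨by omega, hkv⟩,
          fun h => hku (hFu h), ?_⟩
        intro j hj
        have h1 : j ∈ v' ↔ j ∈ v := by
          rw [hv', mem_erase]; constructor
          · exact fun h => h.2
          · exact fun h => ⟨by omega, h⟩
        rw [h1, hagree j hj, hmem]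
        constructor
        · rintro (h | rfl)
          · exact h
          · exact absurd (hj.trans hxk') (lt_irrefl _)
        · exact Or.inl
  rw [shad, mem_filter]
  exact ⟨hv, v', hv'L, hv'sub⟩
end

section
/- Let L ⊆ M_{n,d,t} be a t-spread strongly stable set. Then |shad_t(L)| = Σ_{i=1+(d-1)t}^{n-t} m_{≤ i}(L), where m_{≤i}(L) is the number of elements of L with maximum at most i. -/
open Finset

lemma spread_lb (t : ℕ) (F : Finset ℕ) (h1 : ∀ i ∈ F, 1 ≤ i)
    (hsp : ∀ i ∈ F, ∀ j ∈ F, i < j → i + t ≤ j) :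
    ∀ j ∈ F, 1 + (F.filter (· < j)).card * t ≤ j := by
  intro j
  induction j using Nat.strong_induction_on with
  | _ j ih =>
    intro hj
    by_cases hE : (F.filter (· < j)).Nonempty
    · set m := (F.filter (· < j)).max' hE with hm
      have hmem := (F.filter (· < j)).max'_mem hE
      rw [mem_filter] at hmem
      obtain ⟨hmF, hmj⟩ := hmem
      have hfe : F.filter (· < j) = insert m (F.filter (· < m)) := by
        ext x
        simp only [mem_filter, mem_insert]
        constructor
        · rintro ⟨hx, hxj⟩
          have := Finset.le_max' (F.filter (· < j)) x (mem_filter.2 ⟨hx, hxj⟩)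
          rcases lt_or_eq_of_le this with h | h
          · exact Or.inr ⟨hx, h⟩
          · exact Or.inl h
        · rintro (rfl | ⟨hx, hxm⟩)
          · exact ⟨hmF, hmj⟩
          · exact ⟨hx, hxm.trans hmj⟩
      have hni : m ∉ F.filter (· < m) := by simp
      have hcard : (F.filter (· < j)).card = (F.filter (· < m)).card + 1 := by
        rw [hfe, Finset.card_insert_of_notMem hni]
      have hih := ih m hmj hmF
      have hstep := hsp m hmF j hj hmj
      calc 1 + (F.filter (· < j)).card * t
          = 1 + (F.filter (· < m)).card * t + t := by rw [hcard]; ring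
        _ ≤ m + t := by omega
        _ ≤ j := hstep
    · rw [Finset.not_nonempty_iff_eq_empty] at hE
      rw [hE]
      simpa using h1 j hj

lemma max_lb {n d t : ℕ} {F : Finset ℕ} (hF : F ∈ M n d t) {m : ℕ}
    (hm : m ∈ F) (hmax : ∀ j ∈ F, j ≤ m) : 1 + (d - 1) * t ≤ m := by
  rw [mem_M_iff] at hF
  obtain ⟨hsub, hcard, hsp⟩ := hF
  have h1 : ∀ i ∈ F, 1 ≤ i := fun i hi => (Finset.mem_Icc.1 (hsub hi)).1
  have := spread_lb t F h1 hsp m hm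
  have hfe : F.filter (· < m) = F.erase m := by
    ext x
    simp only [mem_filter, mem_erase]
    constructor
    · rintro ⟨hx, hxm⟩; exact ⟨ne_of_lt hxm, hx⟩
    · rintro ⟨hne, hx⟩; exact ⟨hx, lt_of_le_of_ne (hmax x hx) hne⟩
  rw [hfe, Finset.card_erase_of_mem hm, hcard] at this
  exact this

lemma erase_mem_M {n d t : ℕ} {G : Finset ℕ} (hG : G ∈ M n (d+1) t) {m : ℕ}
    (hm : m ∈ G) : G.erase m ∈ M n d t := by
  rw [mem_M_iff] at hG ⊢
  obtain ⟨hsub, hcard, hsp⟩ := hG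
  refine ⟨(Finset.erase_subset _ _).trans hsub, ?_, ?_⟩
  · rw [Finset.card_erase_of_mem hm, hcard]; rfl
  · intro i hi j hj hij
    exact hsp i (Finset.mem_of_mem_erase hi) j (Finset.mem_of_mem_erase hj) hij

/-- for a `t`-spread strongly stable set `L ⊆ M_{n,d,t}`,
`|shad_t(L)| = Σ_{i=1+(d-1)t}^{n-t} m_{≤ i}(L)`. -/
theorem card_shad (n d t : ℕ) (ht : 1 ≤ t) (hd : 1 ≤ d)
    (L : Finset (Finset ℕ)) (hL : IsSSS n d t L) :
    (shad t n d L).card = ∑ i ∈ Finset.Icc (1 + (d - 1) * t) (n - t), mLe i L := by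
  obtain ⟨hLsub, hSS⟩ := hL
  have hsum : ∑ i ∈ Finset.Icc (1 + (d - 1) * t) (n - t), mLe i L
      = ((Finset.Icc (1 + (d - 1) * t) (n - t)).sigma
          (fun i => L.filter (fun F => ∀ j ∈ F, j ≤ i))).card := by
    rw [Finset.card_sigma]; rfl
  rw [hsum]
  refine (Finset.card_bij (fun p _ => insert (p.1 + t) p.2) ?_ ?_ ?_).symm
  · -- maps into shad
    rintro ⟨i, F⟩ hp
    simp only [Finset.mem_sigma, Finset.mem_Icc, Finset.mem_filter] at hp
    obtain ⟨⟨hai, hint⟩, hFL, hle⟩ := hp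
    have hFM := hLsub hFL
    rw [mem_M_iff] at hFM
    obtain ⟨hsub, hcard, hsp⟩ := hFM
    have h1i : 1 ≤ i := by
      have : 1 ≤ 1 + (d - 1) * t := by omega
      omega
    have hitn : i + t ≤ n := by omega
    have hnotmem : i + t ∉ F := fun h => by have := hle _ h; omega
    have hM : insert (i + t) F ∈ M n (d + 1) t := by
      rw [mem_M_iff]
      refine ⟨?_, ?_, ?_⟩
      · intro x hx
        rcases Finset.mem_insert.1 hx with rfl | hx
        · exact Finset.mem_Icc.2 ⟨by omega, hitn⟩
        · exact hsub hx
      · rw [Finset.card_insert_of_notMem hnotmem, hcard]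
      · intro x hx y hy hxy
        rcases Finset.mem_insert.1 hx with rfl | hx <;>
          rcases Finset.mem_insert.1 hy with rfl | hy
        · omega
        · exact absurd hxy (by have := hle _ hy; omega)
        · have := hle _ hx; omega
        · exact hsp x hx y hy hxy
    simp only [shad, Finset.mem_filter]
    exact ⟨hM, F, hFL, Finset.subset_insert _ _⟩
  · -- injective
    rintro ⟨i, F⟩ hp ⟨i', F'⟩ hq heq
    simp only at heq
    simp only [Finset.mem_sigma, Finset.mem_Icc, Finset.mem_filter] at hp hq
    obtain ⟨⟨hai, _⟩, _, hle⟩ := hp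
    obtain ⟨⟨hai', _⟩, _, hle'⟩ := hq
    have h1 : i + t ∈ insert (i' + t) F' := heq ▸ Finset.mem_insert_self _ _
    have h2 : i' + t ∈ insert (i + t) F := heq ▸ Finset.mem_insert_self _ _
    have hii : i = i' := by
      rcases Finset.mem_insert.1 h1 with h | h
      · omega
      · have := hle' _ h
        rcases Finset.mem_insert.1 h2 with h' | h'
        · omega
        · have := hle _ h'; omega
    subst hii
    have hFF : F = F' := by
      have hnF : i + t ∉ F := fun h => by have := hle _ h; omega
      have hnF' : i + t ∉ F' := fun h => by have := hle' _ h; omega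
      have := congrArg (fun s => Finset.erase s (i + t)) heq
      simpa [Finset.erase_insert hnF, Finset.erase_insert hnF'] using this
    simp [hFF]
  · -- surjective
    intro G hG
    simp only [shad, Finset.mem_filter] at hG
    obtain ⟨hGM, F, hFL, hFG⟩ := hG
    have hGM' := hGM
    rw [mem_M_iff] at hGM'
    obtain ⟨hGsub, hGcard, hGsp⟩ := hGM'
    have hne : G.Nonempty := Finset.card_pos.1 (by omega)
    set m := G.max' hne with hm
    have hmG : m ∈ G := G.max'_mem hne
    have hmax : ∀ j ∈ G, j ≤ m := fun j hj => Finset.le_max' G j hj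
    have hmlb : 1 + d * t ≤ m := by
      have := max_lb hGM hmG hmax
      simpa using this
    have hmn : m ≤ n := (Finset.mem_Icc.1 (hGsub hmG)).2
    -- G.erase m ∈ L
    have hEL : G.erase m ∈ L := by
      have hFM := hLsub hFL
      have hFcard : F.card = d := (mem_M_iff.1 hFM).2.1
      have hsd : (G \ F).card = 1 := by
        rw [Finset.card_sdiff_of_subset hFG, hGcard, hFcard]; omega
      obtain ⟨g, hg⟩ := Finset.card_eq_one.1 hsd
      have hgG : g ∈ G := by
        have : g ∈ G \ F := hg ▸ Finset.mem_singleton_self g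
        exact (Finset.mem_sdiff.1 this).1
      have hgF : g ∉ F := by
        have : g ∈ G \ F := hg ▸ Finset.mem_singleton_self g
        exact (Finset.mem_sdiff.1 this).2
      have hGeq : G = insert g F := by
        ext x
        simp only [Finset.mem_insert]
        constructor
        · intro hx
          by_cases hxF : x ∈ F
          · exact Or.inr hxF
          · left
            have : x ∈ G \ F := Finset.mem_sdiff.2 ⟨hx, hxF⟩
            rw [hg] at this
            exact Finset.mem_singleton.1 this
        · rintro (rfl | hx)
          · exact hgG
          · exact hFG hx
      by_cases hgm : g = m
      · subst hgm
        rw [hGeq, Finset.erase_insert hgF]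
        exact hFL
      · have hmF : m ∈ F := by
          have := hGeq ▸ hmG
          rcases Finset.mem_insert.1 this with h | h
          · exact absurd h.symm hgm
          · exact h
        have hglt : g < m := lt_of_le_of_ne (hmax g hgG) hgm
        have hkey : G.erase m = insert g (F.erase m) := by
          rw [hGeq, Finset.erase_insert_of_ne hgm]
        have hMem : insert g (F.erase m) ∈ M n d t := by
          rw [← hkey]
          exact erase_mem_M hGM hmG
        have := hSS F hFL m hmF g hglt hgF hMem
        rw [hkey]
        exact this
    refine ⟨⟨m - t, G.erase m⟩, ?_, ?_⟩
    · simp only [Finset.mem_sigma, Finset.mem_Icc, Finset.mem_filter]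
      refine ⟨⟨?_, by omega⟩, hEL, ?_⟩
      · obtain ⟨e, rfl⟩ : ∃ e, d = e + 1 := ⟨d - 1, by omega⟩
        simp only [Nat.add_sub_cancel]
        rw [add_mul, one_mul] at hmlb
        generalize e * t = K at hmlb ⊢
        omega
      · intro j hj
        rw [Finset.mem_erase] at hj
        obtain ⟨hjm, hjG⟩ := hj
        have hjlt : j < m := lt_of_le_of_ne (hmax j hjG) hjm
        have := hGsp j hjG m hmG hjlt
        omega
    · simp only
      have htm : t ≤ m := by
        have : t ≤ d * t := Nat.le_mul_of_pos_left t hd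
        omega
      have : m - t + t = m := by omega
      rw [this, Finset.insert_erase hmG]
end

section
/- Let L ⊆ M_{n,d,t} be a t-spread lex set and N ⊆ M_{n,d,t} a t-spread strongly stable set with |L| ≤ |N|. Then m_{≤i}(L) ≤ m_{≤i}(N) for all i, where m_{≤i}(·) counts the members whose maximum element is at most i. -/
open Finset

/-!
Induction on `n`. For `d ≥ 2` and `i < n`, restricting both families to `M (n - 1) d t` reduces the
claim to `m_{≤ n-1}(L) ≤ m_{≤ n-1}(N)`. Suppose this fails; let `w` be the lex-least member of `L`
avoiding `n` and `w'` the set `w` without its maximum. Deleting `n` from the members of `N` that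
contain it gives a strongly stable set `N'` in `M (n - t) (d - 1) t`, and `w'` generates a lex set `L'`
there. Strong stability moves the last element `n` down to any admissible `j < n`, so `N` avoiding `n`
has at least `∑_{j < n-t} m_{≤ j}(N')` members, while the lex up-set of `w` has at most
`∑_{j < n-t} m_{≤ j}(L')` members avoiding `n` and at least `|L'| - 1` containing it. If `|L'| ≤ |N'|`
the induction hypothesis compares the two sums; otherwise counting members containing `n` gives
`|N| < |L|`.
-/

section LexOrder

variable {F G H w : Finset ℕ}

theorem lexGT_trans (h₁ : lexGT F G) (h₂ : lexGT G H) : lexGT F H := by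
  obtain ⟨k, hkF, hkG, hFG⟩ := h₁
  obtain ⟨l, hlG, hlH, hGH⟩ := h₂
  rcases lt_trichotomy k l with hkl | rfl | hlk
  · exact ⟨k, hkF, fun hkH => hkG ((hGH k hkl).2 hkH),
      fun j hj => (hFG j hj).trans (hGH j (hj.trans hkl))⟩
  · exact absurd hlG hkG
  · exact ⟨l, (hFG l hlk).2 hlG, hlH, fun j hj => (hFG j (hj.trans hlk)).trans (hGH j hj)⟩

theorem lexGT_or_lexGT_of_ne (h : F ≠ G) : lexGT F G ∨ lexGT G F := by
  obtain ⟨k, hk, hmin⟩ := (symmDiff F G).exists_min_image id (symmDiff_nonempty.2 h)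
  have hagree : ∀ j < k, (j ∈ F ↔ j ∈ G) := fun j hj => by
    by_contra hj'
    exact absurd (hmin j (by rw [mem_symmDiff]; tauto)) (not_le.2 hj)
  rcases mem_symmDiff.1 hk with ⟨hkF, hkG⟩ | ⟨hkG, hkF⟩
  · exact Or.inl ⟨k, hkF, hkG, hagree⟩
  · exact Or.inr ⟨k, hkG, hkF, fun j hj => (hagree j hj).symm⟩

theorem exists_lexLeast {S : Finset (Finset ℕ)} (hS : S.Nonempty) :
    ∃ w ∈ S, ∀ v ∈ S, v ≠ w → lexGT v w := by
  induction hS using Finset.Nonempty.cons_induction with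
  | singleton a => exact ⟨a, mem_singleton_self a, fun v hv hne => absurd (mem_singleton.1 hv) hne⟩
  | cons a s has hs ih =>
    obtain ⟨w, hw, hmin⟩ := ih
    rcases lexGT_or_lexGT_of_ne (show a ≠ w from fun h => has (h ▸ hw)) with h | h
    · refine ⟨w, mem_cons_of_mem hw, fun v hv hne => ?_⟩
      rcases mem_cons.1 hv with rfl | hv
      exacts [h, hmin v hv hne]
    · refine ⟨a, mem_cons_self a s, fun v hv hne => ?_⟩
      rcases mem_cons.1 hv with rfl | hv
      · exact absurd rfl hne
      · obtain rfl | hvw := eq_or_ne v w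
        exacts [h, lexGT_trans (hmin v hv hvw) h]

theorem lexGT_insert_iff {m : ℕ} (hF : ∀ x ∈ F, x < m) :
    lexGT (insert m F) G ↔ lexGT F G ∨ (m ∉ G ∧ ∀ j < m, (j ∈ F ↔ j ∈ G)) := by
  have hins : ∀ j < m, (j ∈ insert m F ↔ j ∈ F) := fun j hj => by simp [hj.ne]
  constructor
  · rintro ⟨k, hk, hkG, hagree⟩
    rcases mem_insert.1 hk with rfl | hkF
    · exact Or.inr ⟨hkG, fun j hj => (hins j hj).symm.trans (hagree j hj)⟩
    · exact Or.inl ⟨k, hkF, hkG,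
        fun j hj => (hins j (hj.trans (hF k hkF))).symm.trans (hagree j hj)⟩
  · rintro (⟨k, hkF, hkG, hagree⟩ | ⟨hmG, hagree⟩)
    · exact ⟨k, mem_insert_of_mem hkF, hkG,
        fun j hj => (hins j (hj.trans (hF k hkF))).trans (hagree j hj)⟩
    · exact ⟨m, mem_insert_self m F, hmG, fun j hj => (hins j hj).trans (hagree j hj)⟩

theorem lexGT_erase_iff {m : ℕ} (hcard : G.card < w.card) (hm : m ∈ w)
    (hmax : ∀ x ∈ w, x ≤ m) : lexGT G (w.erase m) ↔ lexGT G w := by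
  have herase : ∀ j ≠ m, (j ∈ w.erase m ↔ j ∈ w) := fun j hj => by simp [hj]
  constructor
  · rintro ⟨k, hkG, hkw, hagree⟩
    have hkm : k < m := by
      by_contra! hmk
      have hsub : insert k (w.erase m) ⊆ G := insert_subset hkG fun x hx =>
        (hagree x ((lt_of_le_of_ne (hmax x (mem_of_mem_erase hx)) (ne_of_mem_erase hx)).trans_le
          hmk)).2 hx
      have := card_le_card hsub
      rw [card_insert_of_notMem hkw, card_erase_of_mem hm] at this
      omega
    exact ⟨k, hkG, fun h => hkw ((herase k hkm.ne).2 h),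
      fun j hj => (hagree j hj).trans (herase j (by omega))⟩
  · rintro ⟨k, hkG, hkw, hagree⟩
    have hkm : k < m := by
      by_contra! hmk
      have hsub : w ⊆ G := fun x hx =>
        (hagree x (lt_of_le_of_ne ((hmax x hx).trans hmk) fun h => hkw (h ▸ hx))).2 hx
      exact absurd (card_le_card hsub) (not_le.2 hcard)
    exact ⟨k, hkG, fun h => hkw (mem_of_mem_erase h),
      fun j hj => (hagree j hj).trans (herase j (by omega)).symm⟩

theorem eq_erase_of_subset {m : ℕ} (hGw : G ⊆ w) (hcard : G.card + 1 = w.card) (hm : m ∈ w)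
    (hmax : ∀ x ∈ w, x ≤ m) (hlt : ∀ x ∈ G, ∀ y ∈ w, y ∉ G → x < y) : G = w.erase m := by
  obtain ⟨y, hyw, hyG⟩ : ∃ y ∈ w, y ∉ G := not_subset.1 fun h => by
    have := card_le_card h
    omega
  refine eq_of_subset_of_card_le (fun x hx => mem_erase.2 ⟨?_, hGw hx⟩) ?_
  · rintro rfl
    exact absurd (hmax y hyw) (not_le.2 (hlt x hx y hyw hyG))
  · rw [card_erase_of_mem hm]
    omega

end LexOrder

section SpreadSets

variable {n m d t j : ℕ} {F G : Finset ℕ}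

theorem mem_M : F ∈ M n d t ↔
    F ⊆ Icc 1 n ∧ F.card = d ∧ ∀ i ∈ F, ∀ j ∈ F, i < j → i + t ≤ j := by
  simp only [M, mem_filter, mem_powersetCard, and_assoc]

theorem mem_M_iff_of_le (h : m ≤ n) : F ∈ M m d t ↔ F ∈ M n d t ∧ ∀ j ∈ F, j ≤ m := by
  simp only [mem_M, subset_iff, mem_Icc]
  constructor
  · rintro ⟨hF, hc, hs⟩
    exact ⟨⟨fun j hj => ⟨(hF hj).1, (hF hj).2.trans h⟩, hc, hs⟩, fun j hj => (hF hj).2⟩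
  · rintro ⟨⟨hF, hc, hs⟩, hle⟩
    exact ⟨fun j hj => ⟨(hF hj).1, hle j hj⟩, hc, hs⟩

theorem M_mono (h : m ≤ n) : M m d t ⊆ M n d t := fun _ hF => ((mem_M_iff_of_le h).1 hF).1

theorem erase_mem_M_s6 (hF : F ∈ M n d t) (hm : m ∈ F) (hmax : ∀ x ∈ F, x ≤ m) :
    F.erase m ∈ M (m - t) (d - 1) t := by
  obtain ⟨hFI, hcard, hspread⟩ := mem_M.1 hF
  refine mem_M.2 ⟨fun x hx => ?_, by rw [card_erase_of_mem hm, hcard],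
    fun a ha b hb => hspread a (mem_of_mem_erase ha) b (mem_of_mem_erase hb)⟩
  obtain ⟨hxm, hxF⟩ := mem_erase.1 hx
  have hxt := hspread x hxF m hm (lt_of_le_of_ne (hmax x hxF) hxm)
  have hx1 := (mem_Icc.1 (hFI hxF)).1
  exact mem_Icc.2 ⟨hx1, by omega⟩

theorem insert_mem_M (ht : 1 ≤ t) (hd : 1 ≤ d) (hG : G ∈ M m (d - 1) t)
    (hGj : ∀ x ∈ G, x + t ≤ j) (hj : 1 ≤ j) (hjn : j ≤ n) : insert j G ∈ M n d t := by
  obtain ⟨hGI, hcard, hspread⟩ := mem_M.1 hG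
  have hjG : j ∉ G := fun h => by have := hGj j h; omega
  refine mem_M.2 ⟨insert_subset (mem_Icc.2 ⟨hj, hjn⟩) fun x hx => ?_,
    by rw [card_insert_of_notMem hjG, hcard]; omega, fun a ha b hb hab => ?_⟩
  · have := hGj x hx
    exact mem_Icc.2 ⟨(mem_Icc.1 (hGI hx)).1, by omega⟩
  · rcases mem_insert.1 ha with rfl | haG <;> rcases mem_insert.1 hb with rfl | hbG
    · omega
    · have := hGj b hbG; omega
    · exact hGj a haG
    · exact hspread a haG b hbG hab

end SpreadSets

section LexSets

variable {n m d t : ℕ} {w : Finset ℕ} {L N S : Finset (Finset ℕ)}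

open Classical in
noncomputable def lexUp (n d t : ℕ) (w : Finset ℕ) : Finset (Finset ℕ) :=
  (M n d t).filter fun v => lexGT v w ∨ v = w

open Classical in
theorem mem_lexUp {v : Finset ℕ} : v ∈ lexUp n d t w ↔ v ∈ M n d t ∧ (lexGT v w ∨ v = w) :=
  mem_filter

theorem isLexSet_lexUp : IsLexSet n d t (lexUp n d t w) := by
  refine ⟨fun v hv => (mem_lexUp.1 hv).1, fun u hu v hv hvu => mem_lexUp.2 ⟨hv, Or.inl ?_⟩⟩
  rcases (mem_lexUp.1 hu).2 with h | rfl
  exacts [lexGT_trans hvu h, hvu]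

theorem IsLexSet.lexUp_subset (hL : IsLexSet n d t L) (hw : w ∈ L) : lexUp n d t w ⊆ L := by
  intro v hv
  obtain ⟨hvM, h | rfl⟩ := mem_lexUp.1 hv
  exacts [hL.2 w hw v hvM h, hw]

theorem IsLexSet.filter_le (hL : IsLexSet n d t L) (hm : m ≤ n) :
    IsLexSet m d t (L.filter fun F => ∀ j ∈ F, j ≤ m) := by
  refine ⟨fun F hF => ?_, fun u hu v hv hvu => ?_⟩
  · obtain ⟨hFL, hle⟩ := mem_filter.1 hF
    exact (mem_M_iff_of_le hm).2 ⟨hL.1 hFL, hle⟩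
  · obtain ⟨hvM, hle⟩ := (mem_M_iff_of_le hm).1 hv
    exact mem_filter.2 ⟨hL.2 u (mem_filter.1 hu).1 v hvM hvu, hle⟩

theorem IsSSS.filter_le (hN : IsSSS n d t N) (hm : m ≤ n) :
    IsSSS m d t (N.filter fun F => ∀ j ∈ F, j ≤ m) := by
  refine ⟨fun F hF => ?_, fun F hF j hj i hij hiF hX => ?_⟩
  · obtain ⟨hFN, hle⟩ := mem_filter.1 hF
    exact (mem_M_iff_of_le hm).2 ⟨hN.1 hFN, hle⟩
  · obtain ⟨hXM, hle⟩ := (mem_M_iff_of_le hm).1 hX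
    exact mem_filter.2 ⟨hN.2 F (mem_filter.1 hF).1 j hj i hij hiF hXM, hle⟩

end LexSets

section Counting

variable {n d t i m : ℕ} {S : Finset (Finset ℕ)}

theorem mLe_eq_card (h : ∀ F ∈ S, ∀ j ∈ F, j ≤ i) : mLe i S = S.card :=
  congrArg card (filter_true_of_mem h)

theorem mLe_le_card : mLe i S ≤ S.card := card_filter_le _ _

theorem mLe_eq_card_of_le (hS : S ⊆ M n d t) (h : n ≤ i) : mLe i S = S.card :=
  mLe_eq_card fun _ hF _ hj => (mem_Icc.1 ((mem_M.1 (hS hF)).1 hj)).2.trans h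

theorem mLe_eq_card_of_subset_M_zero (hS : S ⊆ M n 0 t) : mLe i S = S.card :=
  mLe_eq_card fun F hF j hj => by simp [card_eq_zero.1 (mem_M.1 (hS hF)).2.1] at hj

theorem mLe_filter_le (h : i ≤ m) : mLe i (S.filter fun F => ∀ j ∈ F, j ≤ m) = mLe i S := by
  rw [mLe, mLe, filter_filter]
  exact congrArg card <| filter_congr fun F _ =>
    ⟨And.right, fun hF => ⟨fun j hj => (hF j hj).trans h, hF⟩⟩

theorem mLe_pred_eq (hS : S ⊆ M n d t) : mLe (n - 1) S = (S.filter fun F => n ∉ F).card := by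
  refine congrArg card <| filter_congr fun F hF => ?_
  have hle : ∀ j ∈ F, j ≤ n := fun j hj => (mem_Icc.1 ((mem_M.1 (hS hF)).1 hj)).2
  refine ⟨fun h hn => ?_, fun h j hj => ?_⟩
  · have := h n hn
    have := (mem_Icc.1 ((mem_M.1 (hS hF)).1 hn)).1
    omega
  · have := hle j hj
    have : j ≠ n := fun e => h (e ▸ hj)
    omega

theorem card_sigma_Ico_eq_sum_mLe (S : Finset (Finset ℕ)) (t n : ℕ) :
    (S.sigma fun G => Ico (t + G.sup id) n).card = ∑ j ∈ range (n - t), mLe j S := by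
  rw [card_sigma]
  convert sum_card_bipartiteAbove_eq_sum_card_bipartiteBelow (fun (G : Finset ℕ) j => G.sup id ≤ j)
    (s := S) (t := range (n - t)) using 2 with G _ j _
  · rw [bipartiteAbove, Nat.card_Ico, Nat.sub_add_eq, ← Nat.card_Ico]
    congr 1
    ext j
    simp only [mem_Ico, mem_filter, mem_range]
    omega
  · simp [mLe, bipartiteBelow, Finset.sup_le_iff]

end Counting

section DegreeOne

variable {n t a : ℕ} {L N : Finset (Finset ℕ)}

theorem IsSSS.forall_lt_of_singleton_notMem (hN : IsSSS n 1 t N) (ha : 1 ≤ a)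
    (haN : {a} ∉ N) : ∀ F ∈ N, ∀ b ∈ F, b < a := by
  intro F hF b hb
  obtain ⟨hFI, hcard, -⟩ := mem_M.1 (hN.1 hF)
  obtain ⟨c, rfl⟩ := card_eq_one.1 hcard
  obtain rfl := mem_singleton.1 hb
  by_contra! hab
  obtain rfl | hab := hab.eq_or_lt
  · exact haN hF
  have hbn := (mem_Icc.1 (hFI (mem_singleton_self b))).2
  have hM : {a} ∈ M n 1 t := mem_M.2 ⟨by simp [ha, hab.le.trans hbn], card_singleton a, by simp⟩
  have := hN.2 {b} hF b (mem_singleton_self b) a hab (by simp [hab.ne])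
  simp only [erase_singleton, insert_empty] at this
  exact haN (this hM)

theorem mLe_le_mLe_of_isSSS_one (hL : L ⊆ M n 1 t) (hN : IsSSS n 1 t N)
    (hcard : L.card ≤ N.card) (i : ℕ) : mLe i L ≤ mLe i N := by
  by_cases h : ∀ F ∈ L, (∀ j ∈ F, j ≤ i) → F ∈ N
  · exact card_le_card fun F hF =>
      mem_filter.2 ⟨h F (mem_filter.1 hF).1 (mem_filter.1 hF).2, (mem_filter.1 hF).2⟩
  push Not at h
  obtain ⟨F, hFL, hFi, hFN⟩ := h
  obtain ⟨a, rfl⟩ := card_eq_one.1 (mem_M.1 (hL hFL)).2.1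
  have hlt := hN.forall_lt_of_singleton_notMem
    (mem_Icc.1 ((mem_M.1 (hL hFL)).1 (mem_singleton_self a))).1 hFN
  rw [mLe_eq_card fun G hG j hj => (hlt G hG j hj).le.trans (hFi a (mem_singleton_self a))]
  exact mLe_le_card.trans hcard

end DegreeOne

theorem injOn_insert_of_sup_lt :
    Set.InjOn (fun p : (_ : Finset ℕ) × ℕ => insert p.2 p.1) {p | p.1.sup id < p.2} := by
  have hsup : ∀ {G : Finset ℕ} {j : ℕ}, G.sup id < j → (insert j G).sup id = j := fun h => by
    rw [sup_insert, id, sup_eq_left.2 h.le]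
  have hnotMem : ∀ {G : Finset ℕ} {j : ℕ}, G.sup id < j → j ∉ G := fun h hj =>
    (le_sup (f := id) hj).not_gt h
  rintro ⟨G, j⟩ hj ⟨G', j'⟩ hj' h
  simp only [Set.mem_ofPred_eq] at hj hj' h
  obtain rfl : j = j' := by rw [← hsup hj, ← hsup hj', h]
  obtain rfl : G = G' := by rw [← erase_insert (hnotMem hj), ← erase_insert (hnotMem hj'), h]
  rfl

section Link

variable {n d t m : ℕ} {w : Finset ℕ} {N : Finset (Finset ℕ)}

def link (n d t : ℕ) (N : Finset (Finset ℕ)) : Finset (Finset ℕ) :=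
  (M (n - t) (d - 1) t).filter fun G => insert n G ∈ N

theorem add_le_of_mem_M_sub {G : Finset ℕ} (hG : G ∈ M (n - t) d t) : ∀ x ∈ G, x + t ≤ n :=
  fun x hx => by have := mem_Icc.1 ((mem_M.1 hG).1 hx); omega

theorem IsSSS.link (hN : IsSSS n d t N) (ht : 1 ≤ t) (hd : 1 ≤ d) (hn : 1 ≤ n) :
    IsSSS (n - t) (d - 1) t (link n d t N) := by
  refine ⟨filter_subset _ _, fun G hG j hj i hij hiG hX => mem_filter.2 ⟨hX, ?_⟩⟩
  obtain ⟨hGM, hGN⟩ := mem_filter.1 hG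
  have hjn := add_le_of_mem_M_sub hGM j hj
  have key : insert n (insert i (G.erase j)) = insert i ((insert n G).erase j) := by
    rw [erase_insert_of_ne (by omega), insert_comm]
  rw [key]
  refine hN.2 _ hGN j (mem_insert_of_mem hj) i hij (by simp [hiG, show i ≠ n by omega]) ?_
  rw [← key]
  exact insert_mem_M ht hd hX (add_le_of_mem_M_sub hX) hn le_rfl

theorem card_filter_mem_le_card_link (hN : N ⊆ M n d t) :
    (N.filter fun F => n ∈ F).card ≤ (link n d t N).card := by
  refine card_le_card_of_injOn (fun F => F.erase n) (fun F hF => ?_)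
    ((erase_injOn' n).mono fun F hF => (mem_filter.1 hF).2)
  obtain ⟨hFN, hnF⟩ := mem_filter.1 hF
  have hmax : ∀ x ∈ F, x ≤ n := fun x hx => (mem_Icc.1 ((mem_M.1 (hN hFN)).1 hx)).2
  exact mem_filter.2 ⟨erase_mem_M_s6 (hN hFN) hnF hmax, by rwa [insert_erase hnF]⟩

theorem sum_mLe_link_le (hN : IsSSS n d t N) (ht : 1 ≤ t) (hd : 1 ≤ d) :
    ∑ j ∈ range (n - t), mLe j (link n d t N) ≤ (N.filter fun F => n ∉ F).card := by
  rw [← card_sigma_Ico_eq_sum_mLe]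
  refine card_le_card_of_injOn (fun p => insert p.2 p.1) (fun ⟨G, j⟩ hp => ?_)
    (injOn_insert_of_sup_lt.mono fun ⟨G, j⟩ hp => ?_)
  all_goals simp only [coe_sigma, Set.mem_sigma_iff, mem_coe, mem_Ico] at hp; obtain ⟨hG, hj⟩ := hp
  · obtain ⟨hGM, hGN⟩ := mem_filter.1 hG
    have hGj : ∀ x ∈ G, x + t ≤ j := fun x hx => by have := le_sup (f := id) hx; simp at this; omega
    have hnG : n ∉ G := fun h => by have := add_le_of_mem_M_sub hGM n h; omega
    have hjG : j ∉ G := fun h => by have := hGj j h; omega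
    have hX := hN.2 _ hGN n (mem_insert_self n G) j hj.2 (by simp [hjG, hj.2.ne])
      (by rw [erase_insert hnG]; exact insert_mem_M ht hd hGM hGj (by omega) hj.2.le)
    rw [erase_insert hnG] at hX
    exact mem_filter.2 ⟨hX, by simp [hnG, hj.2.ne']⟩
  · change G.sup id < j
    omega

end Link

section Comparison

variable {n d t a m : ℕ} {v w : Finset ℕ} {L N : Finset (Finset ℕ)}

theorem erase_mem_lexUp_erase (hv : v ∈ lexUp n d t w) (hw : w.card = d) (ha : a ∈ v)
    (hamax : ∀ x ∈ v, x ≤ a) (hm : m ∈ w) (hmax : ∀ x ∈ w, x ≤ m) :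
    v.erase a ∈ lexUp (n - t) (d - 1) t (w.erase m) := by
  obtain ⟨hvM, hvw⟩ := mem_lexUp.1 hv
  have han := (mem_Icc.1 ((mem_M.1 hvM).1 ha)).2
  have hvcard := (mem_M.1 hvM).2.1
  refine mem_lexUp.2 ⟨M_mono (by omega) (erase_mem_M_s6 hvM ha hamax), ?_⟩
  have hGlt : ∀ x ∈ v.erase a, x < a := fun x hx =>
    lt_of_le_of_ne (hamax x (mem_of_mem_erase hx)) (ne_of_mem_erase hx)
  have hGcard : (v.erase a).card + 1 = w.card := by
    rw [card_erase_of_mem ha]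
    have := card_pos.2 ⟨a, ha⟩
    omega
  rcases hvw with hvw | rfl
  · rw [← insert_erase ha, lexGT_insert_iff hGlt] at hvw
    rcases hvw with h | ⟨haw, hagree⟩
    · exact Or.inl ((lexGT_erase_iff (by omega) hm hmax).2 h)
    · refine Or.inr (eq_erase_of_subset (fun x hx => (hagree x (hGlt x hx)).1 hx) hGcard hm hmax
        fun x hx y hy hyG => ?_)
      have : ¬ y < a := fun h => hyG ((hagree y h).2 hy)
      have : y ≠ a := fun h => haw (h ▸ hy)
      have := hGlt x hx
      omega
  · rw [le_antisymm (hmax a ha) (hamax m hm)]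
    exact Or.inr rfl

theorem card_filter_notMem_lexUp_le (hd : 2 ≤ d) (hw : w.card = d) (hm : m ∈ w)
    (hmax : ∀ x ∈ w, x ≤ m) :
    ((lexUp n d t w).filter fun v => n ∉ v).card ≤
      ∑ j ∈ range (n - t), mLe j (lexUp (n - t) (d - 1) t (w.erase m)) := by
  rw [← card_sigma_Ico_eq_sum_mLe]
  refine card_le_card_of_surjOn (fun p => insert p.2 p.1) fun v hv => ?_
  obtain ⟨hvU, hnv⟩ := mem_filter.1 (mem_coe.1 hv)
  obtain ⟨hvI, hvcard, hspread⟩ := mem_M.1 (mem_lexUp.1 hvU).1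
  obtain ⟨a, ha, hamax⟩ := v.exists_max_image id (card_pos.1 (by omega))
  obtain ⟨b, hb, hsup⟩ := exists_mem_eq_sup (v.erase a)
    (card_pos.1 (by rw [card_erase_of_mem ha]; omega)) id
  have hbt := hspread b (mem_of_mem_erase hb) a ha
    (lt_of_le_of_ne (hamax b (mem_of_mem_erase hb)) (ne_of_mem_erase hb))
  have han : a < n := lt_of_le_of_ne (mem_Icc.1 (hvI ha)).2 fun h => hnv (h ▸ ha)
  refine ⟨⟨v.erase a, a⟩, ?_, insert_erase ha⟩
  simp only [coe_sigma, Set.mem_sigma_iff, mem_coe, mem_Ico]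
  exact ⟨erase_mem_lexUp_erase hvU hw ha hamax hm hmax, by rw [hsup, id]; omega, han⟩

theorem card_lexUp_erase_le (ht : 1 ≤ t) (hd : 1 ≤ d) (hn : 1 ≤ n) (hw : w.card = d)
    (hm : m ∈ w) (hmax : ∀ x ∈ w, x ≤ m) :
    (lexUp (n - t) (d - 1) t (w.erase m)).card - 1 ≤
      ((lexUp n d t w).filter fun v => n ∈ v).card := by
  have hnotMem : ∀ G ∈ lexUp (n - t) (d - 1) t (w.erase m), n ∉ G := fun G hG hnG => by
    have := add_le_of_mem_M_sub (mem_lexUp.1 hG).1 n hnG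
    omega
  refine (pred_card_le_card_erase (a := w.erase m)).trans (card_le_card_of_injOn (insert n) (fun G hG => ?_)
    fun G₁ hG₁ G₂ hG₂ h => ?_)
  · obtain ⟨hGne, hG⟩ := mem_erase.1 (mem_coe.1 hG)
    obtain ⟨hGM, hGw⟩ := mem_lexUp.1 hG
    have hGn := add_le_of_mem_M_sub hGM
    have hlex : lexGT G w := (lexGT_erase_iff (by rw [(mem_M.1 hGM).2.1]; omega) hm hmax).1
      (hGw.resolve_right hGne)
    refine mem_filter.2 ⟨mem_lexUp.2 ⟨insert_mem_M ht hd hGM hGn hn le_rfl, Or.inl ?_⟩,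
      mem_insert_self n G⟩
    exact (lexGT_insert_iff fun x hx => by have := hGn x hx; omega).2 (Or.inl hlex)
  · rw [← erase_insert (hnotMem G₁ (mem_of_mem_erase hG₁)),
      ← erase_insert (hnotMem G₂ (mem_of_mem_erase hG₂))]
    exact congrArg (·.erase n) h

theorem mLe_pred_le (ht : 1 ≤ t) (hd : 2 ≤ d) (hn : 1 ≤ n) (hL : IsLexSet n d t L)
    (hN : IsSSS n d t N) (hcard : L.card ≤ N.card)
    (IH : ∀ L' N', IsLexSet (n - t) (d - 1) t L' → IsSSS (n - t) (d - 1) t N' →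
      L'.card ≤ N'.card → ∀ j, mLe j L' ≤ mLe j N') :
    mLe (n - 1) L ≤ mLe (n - 1) N := by
  rw [mLe_pred_eq hL.1, mLe_pred_eq hN.1]
  by_contra! hlt
  obtain ⟨w, hw, hwmin⟩ := exists_lexLeast (card_pos.1 (Nat.zero_lt_of_lt hlt))
  obtain ⟨hwL, -⟩ := mem_filter.1 hw
  have hwcard : w.card = d := (mem_M.1 (hL.1 hwL)).2.1
  obtain ⟨m, hm, hmax⟩ := w.exists_max_image id (card_pos.1 (by omega))
  have hL0 : (L.filter fun F => n ∉ F) ⊆ (lexUp n d t w).filter fun v => n ∉ v := fun v hv => by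
    obtain ⟨hvL, hnv⟩ := mem_filter.1 hv
    exact mem_filter.2
      ⟨mem_lexUp.2 ⟨hL.1 hvL, (ne_or_eq v w).imp_left (hwmin v hv)⟩, hnv⟩
  have hU0 := card_filter_notMem_lexUp_le hd hwcard hm hmax (n := n) (t := t)
  have hU1 := card_lexUp_erase_le ht (by omega) hn hwcard hm hmax
  have hN0 := sum_mLe_link_le hN ht (by omega)
  have hL0card := card_le_card hL0
  rcases le_or_gt (lexUp (n - t) (d - 1) t (w.erase m)).card (link n d t N).card with h | h
  · have := sum_le_sum fun j (_ : j ∈ range (n - t)) =>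
      IH _ _ isLexSet_lexUp (hN.link ht (by omega) hn) h j
    omega
  · have := card_filter_add_card_filter_not (s := lexUp n d t w) fun v => n ∈ v
    have := card_filter_add_card_filter_not (s := N) fun F => n ∈ F
    have := card_le_card (hL.lexUp_subset hwL)
    have := card_filter_mem_le_card_link hN.1 (n := n)
    omega

end Comparison

theorem mLe_lex_le_sss_general (n d t : ℕ) (ht : 1 ≤ t)
    (L N : Finset (Finset ℕ)) (hL : IsLexSet n d t L) (hN : IsSSS n d t N)
    (hcard : L.card ≤ N.card) (i : ℕ) :
    mLe i L ≤ mLe i N := by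
  induction n using Nat.strong_induction_on generalizing d L N i with
  | _ n IH =>
  obtain rfl | rfl | hd := (by omega : d = 0 ∨ d = 1 ∨ 2 ≤ d)
  · rwa [mLe_eq_card_of_subset_M_zero hL.1, mLe_eq_card_of_subset_M_zero hN.1]
  · exact mLe_le_mLe_of_isSSS_one hL.1 hN hcard i
  rcases le_or_gt n i with hni | hin
  · rwa [mLe_eq_card_of_le hL.1 hni, mLe_eq_card_of_le hN.1 hni]
  have hpred := mLe_pred_le ht hd (by omega) hL hN hcard (IH (n - t) (by omega) (d - 1))
  rw [← mLe_filter_le (S := L) (Nat.le_pred_of_lt hin),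
    ← mLe_filter_le (S := N) (Nat.le_pred_of_lt hin)]
  exact IH (n - 1) (by omega) d _ _ (hL.filter_le (Nat.sub_le n 1))
    (hN.filter_le (Nat.sub_le n 1)) hpred i

/-- if `L` is a `t`-spread lex set and `N` a `t`-spread strongly stable
set in `M_{n,d,t}` with `|L| ≤ |N|`, then `m_{≤ i}(L) ≤ m_{≤ i}(N)` for all `i`. -/
theorem mLe_lex_le_sss (n d t : ℕ) (ht : 1 ≤ t) (hd : 1 ≤ d)
    (L N : Finset (Finset ℕ)) (hL : IsLexSet n d t L) (hN : IsSSS n d t N)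
    (hcard : L.card ≤ N.card) (i : ℕ) :
    mLe i L ≤ mLe i N :=
  mLe_lex_le_sss_general n d t ht L N hL hN hcard i
end

section
/- Let u = x_{i_1}···x_{i_d} ∈ M_{n,d,t} and let L_u = {v ∈ M_{n,d,t} : v ≥_lex u}. Then |M_{n,d,t} \ L_u| = Σ_{j=1}^{d} C(a_j, j), where a_j = n - i_{d-j+1} - (j-1)(t-1). -/
open Finset

/-!
A monomial `v ∈ M_{n,d,t}` lies strictly below `u` in the lex order exactly when there is a
(necessarily unique) index `k = i_s` of `u` with `k ∉ v` at which `v` first departs from `u`.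
Such a `v` is the prefix `{i_1, …, i_{s-1}}` of `u` followed by an arbitrary `t`-spread set of
`d - s + 1` indices in `(i_s, n]`; no spread condition links the two parts, because
`i_{s-1} + t ≤ i_s`. The `t`-spread `j`-subsets of an interval of length `m` number
`C(m - (j-1)(t-1), j)`: split on whether the top element is used and apply Pascal's rule.
Summing over `s` and substituting `j = d - s + 1` gives the formula.
-/

def IsSpread (t : ℕ) (F : Finset ℕ) : Prop :=
  ∀ x ∈ F, ∀ y ∈ F, x < y → x + t ≤ y

instance (t : ℕ) : DecidablePred (IsSpread t) := fun F =>
  inferInstanceAs (Decidable (∀ x ∈ F, ∀ y ∈ F, x < y → x + t ≤ y))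

def spreadSubsets (t j : ℕ) (s : Finset ℕ) : Finset (Finset ℕ) :=
  (powersetCard j s).filter (IsSpread t)

section Spread

variable {t j : ℕ} {s A B : Finset ℕ}

lemma M_eq_spreadSubsets (n d t : ℕ) : M n d t = spreadSubsets t d (Icc 1 n) := rfl

lemma mem_spreadSubsets : A ∈ spreadSubsets t j s ↔ A ⊆ s ∧ #A = j ∧ IsSpread t A := by
  rw [spreadSubsets, mem_filter, mem_powersetCard, and_assoc]

lemma IsSpread.mono (hB : IsSpread t B) (hAB : A ⊆ B) : IsSpread t A :=
  fun x hx y hy => hB x (hAB hx) y (hAB hy)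

lemma IsSpread.union (hA : IsSpread t A) (hB : IsSpread t B)
    (hAB : ∀ x ∈ A, ∀ y ∈ B, x + t ≤ y) : IsSpread t (A ∪ B) := by
  intro x hx y hy hxy
  rcases mem_union.mp hx with hx | hx <;> rcases mem_union.mp hy with hy | hy
  · exact hA x hx y hy hxy
  · exact hAB x hx y hy
  · have := hAB y hy x hx; omega
  · exact hB x hx y hy hxy

lemma isSpread_empty (t : ℕ) : IsSpread t ∅ := by
  simp [IsSpread]

lemma isSpread_singleton (t b : ℕ) : IsSpread t {b} := by
  simp [IsSpread]

lemma isSpread_insert {b : ℕ} (hA : IsSpread t A) (hb : ∀ x ∈ A, x + t ≤ b) :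
    IsSpread t (insert b A) := by
  rw [insert_eq, union_comm]
  exact hA.union (isSpread_singleton t b) fun x hx y hy => mem_singleton.mp hy ▸ hb x hx

lemma filter_notMem_spreadSubsets (b : ℕ) :
    (spreadSubsets t j s).filter (b ∉ ·) = spreadSubsets t j (s.erase b) := by
  ext A
  simp only [mem_filter, mem_spreadSubsets, subset_erase]
  tauto

lemma card_filter_mem_spreadSubsets_Ioc (ht : 1 ≤ t) {a b : ℕ} (hab : a < b) :
    #((spreadSubsets t (j + 1) (Ioc a b)).filter (b ∈ ·)) = #(spreadSubsets t j (Ioc a (b - t))) := by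
  refine card_nbij' (·.erase b) (insert b) ?_ ?_ (fun F hF => insert_erase (mem_filter.mp hF).2) ?_
  · intro F hF
    simp only [mem_coe, mem_filter, mem_spreadSubsets] at hF
    obtain ⟨⟨hFs, hFc, hF⟩, hbF⟩ := hF
    refine mem_spreadSubsets.mpr ⟨fun x hx => ?_, by simp [card_erase_of_mem hbF, hFc],
      hF.mono (erase_subset b F)⟩
    obtain ⟨hxb, hxF⟩ := mem_erase.mp hx
    have hx := mem_Ioc.mp (hFs hxF)
    have := hF x hxF b hbF (by omega)
    exact mem_Ioc.mpr ⟨hx.1, by omega⟩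
  · intro G hG
    obtain ⟨hGs, hGc, hG⟩ := mem_spreadSubsets.mp hG
    have hlt : ∀ x ∈ G, x + t ≤ b := fun x hx => by have := mem_Ioc.mp (hGs hx); omega
    have hbG : b ∉ G := fun h => by have := hlt b h; omega
    simp only [mem_coe, mem_filter, mem_spreadSubsets]
    refine ⟨⟨insert_subset (mem_Ioc.mpr ⟨hab, le_rfl⟩) fun x hx => ?_,
      by rw [card_insert_of_notMem hbG, hGc], isSpread_insert hG hlt⟩, mem_insert_self b G⟩
    have := mem_Ioc.mp (hGs hx)
    have := hlt x hx
    exact mem_Ioc.mpr ⟨by omega, by omega⟩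
  · intro G hG
    refine erase_insert fun h => ?_
    have := mem_Ioc.mp ((mem_spreadSubsets.mp hG).1 h)
    omega

lemma choose_spread_pascal (ht : 1 ≤ t) {a b : ℕ} (hab : a < b) (j : ℕ) :
    (b - 1 - a - j * (t - 1)).choose (j + 1) + (b - t - a - (j - 1) * (t - 1)).choose j =
      (b - a - j * (t - 1)).choose (j + 1) := by
  rcases j with _ | j
  · simp only [zero_mul, Nat.sub_zero, zero_add, Nat.choose_one_right, Nat.choose_zero_right]
    omega
  · have hq : (j + 1) * (t - 1) = j * (t - 1) + (t - 1) := by ring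
    have hidx : b - t - a - (j + 1 - 1) * (t - 1) = b - 1 - a - (j + 1) * (t - 1) := by
      rw [Nat.add_sub_cancel]; omega
    rw [hidx]
    rcases Nat.eq_zero_or_pos (b - a - (j + 1) * (t - 1)) with h | h
    · rw [h, show b - 1 - a - (j + 1) * (t - 1) = 0 by omega]
      simp
    · rw [show b - a - (j + 1) * (t - 1) = (b - 1 - a - (j + 1) * (t - 1)) + 1 by omega,
        Nat.choose_succ_succ', add_comm]

lemma card_spreadSubsets_Ioc (ht : 1 ≤ t) (a b j : ℕ) :
    #(spreadSubsets t j (Ioc a b)) = (b - a - (j - 1) * (t - 1)).choose j := by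
  induction b using Nat.strong_induction_on generalizing j with
  | _ b ih =>
    rcases j with _ | j
    · simp [spreadSubsets, filter_singleton, isSpread_empty]
    rcases le_or_gt b a with hba | hab
    · simp [spreadSubsets, Ioc_eq_empty_of_le hba, show b - a = 0 by omega]
    rw [← card_filter_add_card_filter_not (b ∈ ·), card_filter_mem_spreadSubsets_Ioc ht hab,
      filter_notMem_spreadSubsets, show (Ioc a b).erase b = Ioc a (b - 1) by ext; simp; omega,
      ih _ (by omega), ih _ (by omega), add_comm, Nat.add_sub_cancel, choose_spread_pascal ht hab]

end Spread

open Classical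

def LexDropAt (u v : Finset ℕ) (k : ℕ) : Prop :=
  k ∈ u ∧ k ∉ v ∧ ∀ j < k, (j ∈ u ↔ j ∈ v)

section Lex

variable {u v : Finset ℕ}

lemma lexGT_iff_exists_lexDropAt : lexGT u v ↔ ∃ k, LexDropAt u v k := Iff.rfl

lemma LexDropAt.unique {k k' : ℕ} (h : LexDropAt u v k) (h' : LexDropAt u v k') : k = k' := by
  by_contra hne
  rcases lt_or_gt_of_ne hne with hlt | hlt
  · exact h.2.1 ((h'.2.2 k hlt).mp h.1)
  · exact h'.2.1 ((h.2.2 k' hlt).mp h'.1)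

lemma lexGT_asymm (h : lexGT u v) : ¬ lexGT v u := by
  obtain ⟨k, hku, hkv, hag⟩ := h
  rintro ⟨k', hk'v, hk'u, hag'⟩
  rcases lt_trichotomy k k' with hlt | rfl | hlt
  · exact hkv ((hag' k hlt).mpr hku)
  · exact hk'u hku
  · exact hk'u ((hag k' hlt).mpr hk'v)

lemma lexGT_or_lexGT_of_ne_s9 (h : u ≠ v) : lexGT u v ∨ lexGT v u := by
  have hne : (symmDiff u v).Nonempty := symmDiff_nonempty.mpr h
  set k := (symmDiff u v).min' hne
  have hag : ∀ j < k, (j ∈ u ↔ j ∈ v) := fun j hj => by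
    have : j ∉ symmDiff u v := fun hj' => (min'_le _ j hj').not_gt hj
    rw [mem_symmDiff] at this
    tauto
  rcases mem_symmDiff.mp (min'_mem _ hne) with ⟨hku, hkv⟩ | ⟨hkv, hku⟩
  · exact Or.inl ⟨k, hku, hkv, hag⟩
  · exact Or.inr ⟨k, hkv, hku, fun j hj => (hag j hj).symm⟩

lemma sdiff_filter_eq_or_lexGT (S : Finset (Finset ℕ)) (u : Finset ℕ) :
    S \ S.filter (fun v => v = u ∨ lexGT v u) = S.filter (lexGT u) := by
  ext v
  simp only [mem_sdiff, mem_filter, not_and, not_or]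
  constructor
  · rintro ⟨hv, h⟩
    obtain ⟨hne, hnlt⟩ := h hv
    exact ⟨hv, (lexGT_or_lexGT_of_ne_s9 (Ne.symm hne)).resolve_right hnlt⟩
  · rintro ⟨hv, h⟩
    exact ⟨hv, fun _ => ⟨fun he => by subst he; exact lexGT_asymm h h, lexGT_asymm h⟩⟩

lemma card_filter_lexGT (S : Finset (Finset ℕ)) (u : Finset ℕ) :
    #(S.filter (lexGT u)) = ∑ k ∈ u, #(S.filter (LexDropAt u · k)) := by
  rw [← card_biUnion]
  · congr 1
    ext v
    simp only [mem_filter, mem_biUnion, lexGT_iff_exists_lexDropAt]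
    exact ⟨fun ⟨hv, k, hk⟩ => ⟨k, hk.1, hv, hk⟩, fun ⟨k, _, hv, hk⟩ => ⟨hv, k, hk⟩⟩
  · intro k _ k' _ hne
    exact disjoint_filter.mpr fun v _ hk hk' => hne (hk.unique hk')

end Lex

section ClassCount

variable {n d t k : ℕ} {u v w : Finset ℕ}

lemma LexDropAt.eq_union (h : LexDropAt u v k) : v = u.filter (· < k) ∪ v.filter (k < ·) := by
  ext x
  simp only [mem_union, mem_filter]
  rcases lt_trichotomy x k with hx | rfl | hx
  · have := h.2.2 x hx
    tauto
  · simp [h.2.1]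
  · have : ¬ x < k := by omega
    tauto

lemma disjoint_filter_lt_filter_gt (A B : Finset ℕ) (k : ℕ) :
    Disjoint (A.filter (· < k)) (B.filter (k < ·)) :=
  disjoint_left.mpr fun x hA hB => by
    have := (mem_filter.mp hA).2
    have := (mem_filter.mp hB).2
    omega

lemma LexDropAt.filter_gt_mem_spreadSubsets (hv : v ∈ M n d t) (h : LexDropAt u v k) :
    v.filter (k < ·) ∈ spreadSubsets t (d - #(u.filter (· < k))) (Ioc k n) := by
  obtain ⟨hvS, hvc, hvs⟩ := mem_spreadSubsets.mp hv
  have hcard := congrArg card h.eq_union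
  rw [card_union_of_disjoint (disjoint_filter_lt_filter_gt u v k)] at hcard
  refine mem_spreadSubsets.mpr ⟨fun x hx => ?_, by omega, hvs.mono (filter_subset _ v)⟩
  obtain ⟨hxv, hkx⟩ := mem_filter.mp hx
  exact mem_Ioc.mpr ⟨hkx, (mem_Icc.mp (hvS hxv)).2⟩

lemma filter_lt_union_mem_M (hu : u ∈ M n d t) (hk : k ∈ u)
    (hw : w ∈ spreadSubsets t (d - #(u.filter (· < k))) (Ioc k n)) :
    u.filter (· < k) ∪ w ∈ M n d t := by
  obtain ⟨huS, huc, hus⟩ := mem_spreadSubsets.mp hu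
  obtain ⟨hwS, hwc, hws⟩ := mem_spreadSubsets.mp hw
  have hkw : ∀ y ∈ w, k < y := fun y hy => (mem_Ioc.mp (hwS hy)).1
  have hcd : #(u.filter (· < k)) ≤ d := huc ▸ card_filter_le u _
  have hdisj : Disjoint (u.filter (· < k)) w := disjoint_left.mpr fun y hy hyw => by
    have := (mem_filter.mp hy).2
    have := hkw y hyw
    omega
  refine mem_spreadSubsets.mpr ⟨union_subset ((filter_subset _ u).trans huS) fun y hy => ?_,
    by rw [card_union_of_disjoint hdisj, hwc]; omega, ?_⟩
  · have := (mem_Icc.mp (huS hk)).1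
    have := mem_Ioc.mp (hwS hy)
    exact mem_Icc.mpr ⟨by omega, this.2⟩
  · refine (hus.mono (filter_subset _ u)).union hws fun x hx y hy => ?_
    obtain ⟨hxu, hxk⟩ := mem_filter.mp hx
    have := hus x hxu k hk hxk
    have := hkw y hy
    omega

lemma lexDropAt_filter_lt_union (hk : k ∈ u) (hw : ∀ y ∈ w, k < y) :
    LexDropAt u (u.filter (· < k) ∪ w) k := by
  refine ⟨hk, ?_, fun x hx => ?_⟩
  · simp only [mem_union, mem_filter, lt_irrefl, and_false, false_or]
    exact fun h => (hw k h).false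
  · simp only [mem_union, mem_filter, hx, and_true]
    exact ⟨Or.inl, fun h => h.elim id fun h => absurd (hw x h) (by omega)⟩

lemma filter_gt_filter_lt_union (hw : ∀ y ∈ w, k < y) :
    (u.filter (· < k) ∪ w).filter (k < ·) = w := by
  rw [filter_union, filter_filter, filter_true_of_mem hw]
  convert empty_union w
  exact filter_false_of_mem fun x _ => by omega

lemma card_filter_lexDropAt (hu : u ∈ M n d t) (hk : k ∈ u) :
    #((M n d t).filter (LexDropAt u · k)) =
      #(spreadSubsets t (d - #(u.filter (· < k))) (Ioc k n)) := by
  have gt_of_mem {w} (hw : w ∈ spreadSubsets t (d - #(u.filter (· < k))) (Ioc k n)) :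
      ∀ y ∈ w, k < y :=
    fun y hy => (mem_Ioc.mp ((mem_spreadSubsets.mp hw).1 hy)).1
  refine card_nbij' (·.filter (k < ·)) (u.filter (· < k) ∪ ·) ?_ ?_ ?_ ?_
  · intro v hv
    exact (mem_filter.mp hv).2.filter_gt_mem_spreadSubsets (mem_filter.mp hv).1
  · intro w hw
    exact mem_filter.mpr ⟨filter_lt_union_mem_M hu hk hw, lexDropAt_filter_lt_union hk (gt_of_mem hw)⟩
  · intro v hv
    exact (mem_filter.mp hv).2.eq_union.symm
  · intro w hw
    exact filter_gt_filter_lt_union (gt_of_mem hw)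

lemma card_filter_lexGT_of_mem_M (ht : 1 ≤ t) (hu : u ∈ M n d t) :
    #((M n d t).filter (lexGT u)) =
      ∑ k ∈ u, (n - k - (d - #(u.filter (· < k)) - 1) * (t - 1)).choose (d - #(u.filter (· < k))) := by
  rw [card_filter_lexGT]
  refine sum_congr rfl fun k hk => ?_
  rw [card_filter_lexDropAt hu hk, card_spreadSubsets_Ioc ht]

end ClassCount

lemma card_filter_lt_image_Icc {d s : ℕ} {i : ℕ → ℕ} (hi : StrictMonoOn i (Icc 1 d))
    (hs : s ∈ Icc 1 d) : #(((Icc 1 d).image i).filter (· < i s)) = s - 1 := by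
  rw [filter_image, card_image_of_injOn (hi.injOn.mono (filter_subset _ _))]
  convert Nat.card_Ico 1 s using 2
  ext r
  simp only [mem_filter, mem_Icc, mem_Ico]
  constructor
  · rintro ⟨hr, hrs⟩
    exact ⟨hr.1, (hi.lt_iff_lt (mem_Icc.mpr hr) hs).mp hrs⟩
  · rintro ⟨hr, hrs⟩
    have hr' : r ∈ Icc 1 d := mem_Icc.mpr ⟨hr, by have := (mem_Icc.mp hs).2; omega⟩
    exact ⟨mem_Icc.mp hr', (hi.lt_iff_lt hr' hs).mpr hrs⟩

lemma sum_Icc_one_reflect {β : Type*} [AddCommMonoid β] (f : ℕ → β) (d : ℕ) :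
    ∑ j ∈ Icc 1 d, f (d - j + 1) = ∑ j ∈ Icc 1 d, f j := by
  refine sum_nbij' (d - · + 1) (d - · + 1) ?_ ?_ ?_ ?_ fun _ _ => rfl <;>
    simp only [mem_Icc] <;> intro j hj <;> omega

theorem card_compl_Lu_general (n d t : ℕ) (ht : 1 ≤ t)
    (i : ℕ → ℕ) (hi : ∀ j k, 1 ≤ j → j < k → k ≤ d → i j < i k)
    (u : Finset ℕ) (hu : u = (Finset.Icc 1 d).image i) (huM : u ∈ M n d t) :
    (M n d t \ (M n d t).filter (fun v => v = u ∨ lexGT v u)).card =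
      ∑ j ∈ Finset.Icc 1 d, Nat.choose (n - i (d - j + 1) - (j - 1) * (t - 1)) j := by
  have hmono : StrictMonoOn i (Icc 1 d) := fun j hj k hk hjk =>
    hi j k (mem_Icc.mp hj).1 hjk (mem_Icc.mp hk).2
  rw [sdiff_filter_eq_or_lexGT, card_filter_lexGT_of_mem_M ht huM, hu, sum_image hmono.injOn,
    ← sum_Icc_one_reflect]
  refine sum_congr rfl fun j hj => ?_
  have hj' := mem_Icc.mp hj
  rw [card_filter_lt_image_Icc hmono (mem_Icc.mpr ⟨by omega, by omega⟩),
    show d - (d - j + 1 - 1) = j by omega]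

/-- for `u = x_{i_1}⋯x_{i_d} ∈ M_{n,d,t}` and
`L_u = {v ∈ M_{n,d,t} : v ≥_lex u}`,
`|M_{n,d,t} \ L_u| = Σ_{j=1}^d C(a_j, j)` with `a_j = n - i_{d-j+1} - (j-1)(t-1)`. -/
theorem card_compl_Lu (n d t : ℕ) (ht : 1 ≤ t) (hd : 1 ≤ d)
    (i : ℕ → ℕ) (hi : ∀ j k, 1 ≤ j → j < k → k ≤ d → i j < i k)
    (u : Finset ℕ) (hu : u = (Finset.Icc 1 d).image i) (huM : u ∈ M n d t) :
    (M n d t \ (M n d t).filter (fun v => v = u ∨ lexGT v u)).card =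
      ∑ j ∈ Finset.Icc 1 d, Nat.choose (n - i (d - j + 1) - (j - 1) * (t - 1)) j :=
  card_compl_Lu_general n d t ht i hi u hu huM
end
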